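/- arXiv:math/0211023 — 2 statements merged into one kernel-verified Lean document; each statement's English description precedes it below -/
import Mathlib

section
/- Every strong measure zero set can be covered by a translation of any comeager set: if X ⊆ 2^ω has strong measure zero and G ⊆ 2^ω is comeager, then there exists z ∈ 2^ω such that X ⊆ G + z, where G + z = {g + z : g ∈ G}. -/
open Pointwise

/-- The standard metric on the Cantor space `2^ω = ℕ → ZMod 2`:
`d(x,y) = 2^{-min {n | x n ≠ y n}}` for `x ≠ y`, and `d(x,x) = 0`. -/
noncomputable def cantorDist (x y : ℕ → ZMod 2) : ℝ :=
  haveI := Classical.propDecidable (x = y)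
  if x = y then 0 else (2 : ℝ)⁻¹ ^ sInf {n : ℕ | x n ≠ y n}

/-- The diameter of a set in the Cantor space: the supremum of pairwise distances. -/
noncomputable def cantorDiam (A : Set (ℕ → ZMod 2)) : ℝ :=
  sSup (Set.image2 cantorDist A A)

/-- `X ⊆ 2^ω` has strong measure zero if for every sequence `(ε n)` of positive reals
there is a sequence `(Y n)` of subsets of `X` whose union is `X` with `diam (Y n) < ε n`. -/
def HasStrongMeasureZero (X : Set (ℕ → ZMod 2)) : Prop :=
  ∀ ε : ℕ → ℝ, (∀ n, 0 < ε n) →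
    ∃ Y : ℕ → Set (ℕ → ZMod 2), (∀ n, Y n ⊆ X) ∧ X = ⋃ n, Y n ∧ ∀ n, cantorDiam (Y n) < ε n

namespace GMSAux

def cyl (s : ℕ → ZMod 2) (k : ℕ) : Set (ℕ → ZMod 2) := {x | ∀ i < k, x i = s i}

lemma isOpen_cyl (s : ℕ → ZMod 2) (k : ℕ) : IsOpen (cyl s k) := by
  have : cyl s k = ⋂ i ∈ Finset.range k, {x : ℕ → ZMod 2 | x i = s i} := by
    ext x; simp [cyl]
  rw [this]
  refine isOpen_biInter_finset fun i _ => ?_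
  have : {x : ℕ → ZMod 2 | x i = s i} = (fun x : ℕ → ZMod 2 => x i) ⁻¹' {s i} := rfl
  rw [this]
  exact (isOpen_discrete {s i}).preimage (continuous_apply i)

lemma cyl_mono (s : ℕ → ZMod 2) {k k' : ℕ} (h : k ≤ k') : cyl s k' ⊆ cyl s k :=
  fun x hx i hi => hx i (lt_of_lt_of_le hi h)

lemma exists_cyl_subset {U : Set (ℕ → ZMod 2)} (hU : IsOpen U) {x : ℕ → ZMod 2}
    (hx : x ∈ U) : ∃ k, cyl x k ⊆ U := by
  obtain ⟨I, u, h1, h2⟩ := isOpen_pi_iff.mp hU x hx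
  refine ⟨I.sup id + 1, fun y hy => h2 fun i hi => ?_⟩
  have : y i = x i := hy i (Nat.lt_succ_of_le (Finset.le_sup (f := id) hi))
  rw [this]; exact (h1 i hi).2

lemma nwd_ext {F : Set (ℕ → ZMod 2)} (hC : IsClosed F) (hN : IsNowhereDense F)
    (s : ℕ → ZMod 2) (k : ℕ) :
    ∃ k' t, k < k' ∧ (∀ i < k, t i = s i) ∧ cyl t k' ∩ F = ∅ := by
  have hns : ¬ cyl s k ⊆ F := by
    intro h
    have : s ∈ interior (closure F) := by
      rw [hC.closure_eq]
      exact mem_interior.mpr ⟨cyl s k, h, isOpen_cyl s k, fun i _ => rfl⟩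
    rw [hN] at this; exact this
  obtain ⟨x, hx1, hx2⟩ := Set.not_subset.mp hns
  obtain ⟨k0, hk0⟩ := exists_cyl_subset hC.isOpen_compl hx2
  refine ⟨max (k + 1) k0, x, lt_of_lt_of_le (Nat.lt_succ_self k) (le_max_left _ _),
    fun i hi => hx1 i hi, ?_⟩
  ext y
  simp only [Set.mem_inter_iff, Set.mem_empty_iff_false, iff_false, not_and]
  intro hy
  exact hk0 (cyl_mono x (le_max_right _ _) hy)

lemma nwd_ext_uniform {F : Set (ℕ → ZMod 2)} (hC : IsClosed F) (hN : IsNowhereDense F)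
    (k : ℕ) :
    ∃ k', k < k' ∧ ∀ s : ℕ → ZMod 2, ∃ t, (∀ i < k, t i = s i) ∧ cyl t k' ∩ F = ∅ := by
  classical
  have H := fun u : Fin k → ZMod 2 =>
    nwd_ext hC hN (fun i => if h : i < k then u ⟨i, h⟩ else 0) k
  choose K T hK hT hTF using H
  refine ⟨max (Finset.univ.sup K) (k + 1), lt_of_lt_of_le (Nat.lt_succ_self k) (le_max_right _ _),
    fun s => ?_⟩
  set u : Fin k → ZMod 2 := fun i => s i with hu
  refine ⟨T u, fun i hi => by simpa [hi] using hT u i hi, ?_⟩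
  have hsub : cyl (T u) (max (Finset.univ.sup K) (k + 1)) ⊆ cyl (T u) (K u) :=
    cyl_mono _ (le_trans (Finset.le_sup (Finset.mem_univ u)) (le_max_left _ _))
  rw [← Set.subset_empty_iff, ← hTF u]
  exact Set.inter_subset_inter_left _ hsub

lemma cantorDist_le_one (x y : ℕ → ZMod 2) : cantorDist x y ≤ 1 := by
  unfold cantorDist
  split
  · norm_num
  · exact pow_le_one₀ (by norm_num) (by norm_num)

lemma agree_of_diam_lt {Y : Set (ℕ → ZMod 2)} {x y : ℕ → ZMod 2} {k : ℕ}
    (hx : x ∈ Y) (hy : y ∈ Y) (hd : cantorDiam Y < (2 : ℝ)⁻¹ ^ k) :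
    ∀ i < k, x i = y i := by
  intro i hi
  by_cases hxy : x = y
  · rw [hxy]
  have hle : cantorDist x y ≤ cantorDiam Y := by
    apply le_csSup
    · exact ⟨1, by rintro r ⟨a, _, b, _, rfl⟩; exact cantorDist_le_one a b⟩
    · exact Set.mem_image2_of_mem hx hy
  have hlt : cantorDist x y < (2 : ℝ)⁻¹ ^ k := lt_of_le_of_lt hle hd
  unfold cantorDist at hlt
  rw [if_neg hxy] at hlt
  have hkm : k < sInf {n : ℕ | x n ≠ y n} :=
    (pow_lt_pow_iff_right_of_lt_one₀ (by norm_num) (by norm_num)).mp hlt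
  by_contra hne
  exact absurd (Nat.sInf_le hne) (not_le.mpr (lt_trans hi hkm))

lemma zmod2_cancel : ∀ a b : ZMod 2, a + b + b = a := by decide
lemma zmod2_cancel' : ∀ a b : ZMod 2, a + (a + b) = b := by decide

end GMSAux

open GMSAux in
/-- Every strong measure zero set is covered by a translation of any comeager set:
if `X` has strong measure zero and `Gᶜ` is meager, then `X ⊆ G + z` for some `z`. -/
theorem hasStrongMeasureZero_subset_translate_of_comeager (X G : Set (ℕ → ZMod 2))
    (hX : HasStrongMeasureZero X) (hG : IsMeagre Gᶜ) :
    ∃ z : ℕ → ZMod 2, X ⊆ (fun g => g + z) '' G := by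
  classical
  -- Step 1: a sequence of closed nowhere dense sets covering Gᶜ
  obtain ⟨S, hSnwd, hScnt, hSsub⟩ := isMeagre_iff_countable_union_isNowhereDense.mp hG
  obtain ⟨f, hf⟩ := (hScnt.insert ∅).exists_eq_range (Set.insert_nonempty _ _)
  set F : ℕ → Set (ℕ → ZMod 2) := fun n => closure (f n) with hF
  have hFC : ∀ n, IsClosed (F n) := fun n => isClosed_closure
  have hFnwd : ∀ n, IsNowhereDense (F n) := by
    intro n
    have : f n ∈ insert ∅ S := hf ▸ Set.mem_range_self n
    rcases this with h | h
    · rw [hF]; simp only [h]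
      exact IsNowhereDense.closure (by simp [IsNowhereDense])
    · exact (hSnwd _ h).closure
  have hcover : Gᶜ ⊆ ⋃ n, F n := by
    intro x hx
    obtain ⟨t, htS, hxt⟩ := hSsub hx
    have : t ∈ Set.range f := hf ▸ Set.mem_insert_of_mem _ htS
    obtain ⟨n, rfl⟩ := this
    exact Set.mem_iUnion.mpr ⟨n, subset_closure hxt⟩
  -- Step 2: uniform extension lengths and witnesses
  have hL := fun n k => nwd_ext_uniform (hFC n) (hFnwd n) k
  choose L hL1 hL2 using hL
  choose T hT1 hT2 using hL2
  -- Step 3: lengths m and epsilons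
  set m : ℕ → ℕ := fun j => Nat.rec 0 (fun j' ih => L (Nat.unpair j').1 ih) j with hmdef
  have hm : ∀ j, m (j + 1) = L (Nat.unpair j).1 (m j) := fun j => rfl
  have hmlt : ∀ j, m j < m (j + 1) := fun j => by rw [hm]; exact hL1 _ _
  have hmono : StrictMono m := strictMono_nat_of_lt_succ hmlt
  set ε : ℕ → ℝ := fun j => (2 : ℝ)⁻¹ ^ m (j + 1) with hε
  have hεpos : ∀ j, 0 < ε j := fun j => pow_pos (by norm_num) _
  -- Step 4: covers, column by column
  have hZ := fun n => hX (fun m' => ε (Nat.pair n m')) (fun m' => hεpos _)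
  choose Z hZ1 hZ2 hZ3 using hZ
  set Y : ℕ → Set (ℕ → ZMod 2) := fun j => Z (Nat.unpair j).1 (Nat.unpair j).2 with hY
  have hYdiam : ∀ j, cantorDiam (Y j) < ε j := by
    intro j
    have := hZ3 (Nat.unpair j).1 (Nat.unpair j).2
    rwa [Nat.pair_unpair] at this
  -- reference points
  set σ : ℕ → (ℕ → ZMod 2) := fun j => if h : (Y j).Nonempty then h.choose else 0 with hσdef
  have hσ : ∀ j, (Y j).Nonempty → σ j ∈ Y j := by
    intro j h; rw [hσdef]; simp only [dif_pos h]; exact h.choose_spec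
  -- Step 5: recursive construction of w
  set w : ℕ → (ℕ → ZMod 2) := fun j => Nat.rec 0
    (fun j' ih => if (Y j').Nonempty then σ j' + T (Nat.unpair j').1 (m j') (σ j' + ih) else ih)
    j with hwdef
  have hwsucc : ∀ j, w (j + 1) =
      if (Y j).Nonempty then σ j + T (Nat.unpair j).1 (m j) (σ j + w j) else w j :=
    fun j => rfl
  have hw_agree : ∀ j, ∀ i < m j, w (j + 1) i = w j i := by
    intro j i hi
    rw [hwsucc]
    by_cases h : (Y j).Nonempty
    · rw [if_pos h]
      have := hT1 (Nat.unpair j).1 (m j) (σ j + w j) i hi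
      show σ j i + T (Nat.unpair j).1 (m j) (σ j + w j) i = w j i
      rw [this]
      exact zmod2_cancel' _ _
    · rw [if_neg h]
  have hw_stab : ∀ j j', j ≤ j' → ∀ i < m j, w j' i = w j i := by
    intro j j' hjj'
    induction j' , hjj' using Nat.le_induction with
    | base => intro i _; rfl
    | succ j' hjj' ih =>
      intro i hi
      rw [hw_agree j' i (lt_of_lt_of_le hi (hmono.le_iff_le.mpr hjj'))]
      exact ih i hi
  set z : ℕ → ZMod 2 := fun i => w (i + 1) i with hz
  have hzw : ∀ j, ∀ i < m j, z i = w j i := by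
    intro j i hi
    rcases le_total j (i + 1) with h | h
    · exact hw_stab j (i + 1) h i hi
    · exact (hw_stab (i + 1) j h i (lt_of_lt_of_le (Nat.lt_succ_self i) hmono.le_apply)).symm
  -- Step 6: the key avoidance property
  have hkey : ∀ (x : ℕ → ZMod 2) (j : ℕ), x ∈ Y j → x + z ∉ F (Nat.unpair j).1 := by
    intro x j hxY hFmem
    have hne : (Y j).Nonempty := ⟨x, hxY⟩
    have hmem : x + z ∈ cyl (T (Nat.unpair j).1 (m j) (σ j + w j)) (m (j + 1)) := by
      intro i hi
      show x i + z i = _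
      rw [hzw (j + 1) i hi, hwsucc, if_pos hne]
      show x i + (σ j i + T (Nat.unpair j).1 (m j) (σ j + w j) i) = _
      have hxσ : x i = σ j i := agree_of_diam_lt hxY (hσ j hne) (hYdiam j) i hi
      rw [hxσ]
      exact zmod2_cancel' _ _
    have := hT2 (Nat.unpair j).1 (m j) (σ j + w j)
    rw [← hm j] at this
    have : x + z ∈ (∅ : Set (ℕ → ZMod 2)) := this ▸ Set.mem_inter hmem hFmem
    exact this
  -- Step 7: conclusion
  refine ⟨z, fun x hx => ⟨x + z, ?_, ?_⟩⟩
  · by_contra h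
    obtain ⟨n, hn⟩ := Set.mem_iUnion.mp (hcover h)
    rw [hZ2 n] at hx
    obtain ⟨m', hm'⟩ := Set.mem_iUnion.mp hx
    have hxY : x ∈ Y (Nat.pair n m') := by rw [hY]; simp only [Nat.unpair_pair]; exact hm'
    have := hkey x (Nat.pair n m') hxY
    rw [Nat.unpair_pair] at this
    exact this hn
  · funext i
    exact zmod2_cancel (x i) (z i)
end

section
/- (Existence of big sequences) For every countable family 𝒜 of infinite subsets of 2^ω there exists a sequence (C_n) of clopen subsets of 2^ω, determined by pairwise disjoint finite sets of coordinates, with μ(C_n) ≤ 2^{-n} for every n, such that for every X ∈ 𝒜 there are infinitely many n with X + C_n = 2^ω; moreover the set H = ⋂_m ⋃_{n>m} C_n is a null G_δ set. -/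
open MeasureTheory Pointwise

/-- The standard product (Haar) probability measure on the Cantor space
`2^ω = ℕ → ZMod 2`, normalized so that the whole space has measure `1`. -/
noncomputable def cantorMeasure : Measure (ℕ → ZMod 2) :=
  Measure.addHaarMeasure
    ⟨⟨Set.univ, isCompact_univ⟩, by rw [interior_univ]; exact Set.univ_nonempty⟩

/-- A set `C ⊆ 2^ω` is determined by a finite set `S` of coordinates if membership in `C`
depends only on the restriction to `S`. -/
def DeterminedBy (C : Set (ℕ → ZMod 2)) (S : Finset ℕ) : Prop :=
  ∀ x ∈ C, ∀ y : ℕ → ZMod 2, (∀ i ∈ S, y i = x i) → y ∈ C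

instance : cantorMeasure.IsAddLeftInvariant := by unfold cantorMeasure; infer_instance

lemma cantorMeasure_univ : cantorMeasure Set.univ = 1 := by
  have := MeasureTheory.Measure.addHaarMeasure_self
    (K₀ := (⟨⟨Set.univ, isCompact_univ⟩, by rw [interior_univ]; exact Set.univ_nonempty⟩ :
      TopologicalSpace.PositiveCompacts (ℕ → ZMod 2)))
  simpa [cantorMeasure] using this

lemma zmod2_add_self (a : ZMod 2) : a + a = 0 := by revert a; decide

lemma zmod2_add_eq_one {a b : ZMod 2} (h : a ≠ b) : a + b = 1 := by revert a b; decide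

lemma zmod2_add_cancel (a b : ZMod 2) : a + (b + a) = b := by revert a b; decide

lemma zmod2_eq_of_add_eq_zero {a b : ZMod 2} (h : a + b = 0) : b = a := by revert a b; decide

lemma pi_add_self {n : ℕ} (v : Fin n → ZMod 2) : v + v = 0 := by
  funext i; exact zmod2_add_self (v i)

lemma exists_acc {X : Set (ℕ → ZMod 2)} (hX : X.Infinite) :
    ∃ z : ℕ → ZMod 2, ∀ m : ℕ, ∃ y ∈ X, y ≠ z ∧ ∀ i < m, y i = z i := by
  obtain ⟨z, hz⟩ := hX.exists_accPt_principal
  refine ⟨z, fun m => ?_⟩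
  have hU : {y : ℕ → ZMod 2 | ∀ i < m, y i = z i} ∈ nhds z := by
    have ho : IsOpen {y : ℕ → ZMod 2 | ∀ i < m, y i = z i} := by
      have he : {y : ℕ → ZMod 2 | ∀ i < m, y i = z i}
          = ⋂ i ∈ Finset.range m, (fun p : ℕ → ZMod 2 => p i) ⁻¹' {z i} := by
        ext y; simp
      rw [he]
      exact isOpen_biInter_finset fun i _ => (isOpen_discrete _).preimage (continuous_apply i)
    exact ho.mem_nhds (fun i _ => rfl)
  obtain ⟨y, ⟨hyU, hyX⟩, hyne⟩ := accPt_iff_nhds.mp hz _ hU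
  exact ⟨y, hyX, hyne, hyU⟩

/-- From an infinite set, extract points `y j` converging to an accumulation point `z`,
with strictly increasing first-difference positions `q j`. -/
lemma exists_pts {X : Set (ℕ → ZMod 2)} (hX : X.Infinite) (base : ℕ) :
    ∃ (z : ℕ → ZMod 2) (y : ℕ → ℕ → ZMod 2) (q : ℕ → ℕ),
      (∀ j, y j ∈ X) ∧ StrictMono q ∧ base ≤ q 0 ∧
      (∀ j, ∀ i < q j, y j i = z i) ∧ (∀ j, y j (q j) ≠ z (q j)) := by
  obtain ⟨z, hz⟩ := exists_acc hX
  choose pt hptX hptne hptag using hz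
  have hex : ∀ m, ∃ i, pt m i ≠ z i := fun m => Function.ne_iff.mp (hptne m)
  set d : ℕ → ℕ := fun m => Nat.find (hex m) with hd
  have hd1 : ∀ m, pt m (d m) ≠ z (d m) := fun m => Nat.find_spec (hex m)
  have hd2 : ∀ m, ∀ i < d m, pt m i = z i := fun m i hi => not_not.mp (Nat.find_min (hex m) hi)
  have hd3 : ∀ m, m ≤ d m := by
    intro m
    by_contra h
    push_neg at h
    exact hd1 m (hptag m _ h)
  set A : ℕ → ℕ := fun j => Nat.rec base (fun _ a => d a + 1) j with hA
  refine ⟨z, fun j => pt (A j), fun j => d (A j), fun j => hptX _, ?_, hd3 base,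
    fun j i hi => hd2 _ i hi, fun j => hd1 _⟩
  apply strictMono_nat_of_lt_succ
  intro j
  have h1 : A (j + 1) = d (A j) + 1 := rfl
  have h2 : A (j + 1) ≤ d (A (j + 1)) := hd3 _
  omega

/-- Triangular system of coefficient vectors. -/
noncomputable def coeffs (n N : ℕ) (a : ℕ → ℕ → ZMod 2) (γ : ℕ → (Fin n → ZMod 2)) :
    ℕ → (Fin n → ZMod 2)
  | k => γ k + ∑ l ∈ (Finset.Ico (k + 1) N).attach, a k l.val • coeffs n N a γ l.val
termination_by k => N - k
decreasing_by
  have := Finset.mem_Ico.mp l.2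
  omega

lemma coeffs_spec (n N : ℕ) (a : ℕ → ℕ → ZMod 2) (γ : ℕ → (Fin n → ZMod 2))
    (j : ℕ) (hj : j < N) (hdiag : a j j = 1) (hlow : ∀ k < j, a j k = 0) :
    ∑ k ∈ Finset.range N, a j k • coeffs n N a γ k = γ j := by
  have hsplit1 : ∑ k ∈ Finset.Ico 0 j, a j k • coeffs n N a γ k
      + ∑ k ∈ Finset.Ico j N, a j k • coeffs n N a γ k
      = ∑ k ∈ Finset.Ico 0 N, a j k • coeffs n N a γ k :=
    Finset.sum_Ico_consecutive _ (Nat.zero_le j) (le_of_lt hj)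
  have hsplit2 : ∑ k ∈ Finset.Ico j (j + 1), a j k • coeffs n N a γ k
      + ∑ k ∈ Finset.Ico (j + 1) N, a j k • coeffs n N a γ k
      = ∑ k ∈ Finset.Ico j N, a j k • coeffs n N a γ k :=
    Finset.sum_Ico_consecutive _ (Nat.le_succ j) hj
  have h0 : ∑ k ∈ Finset.Ico 0 j, a j k • coeffs n N a γ k = 0 :=
    Finset.sum_eq_zero fun k hk => by
      rw [hlow k (Finset.mem_Ico.mp hk).2, zero_smul]
  have hsing : ∑ k ∈ Finset.Ico j (j + 1), a j k • coeffs n N a γ k = coeffs n N a γ j := by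
    rw [Nat.Ico_succ_singleton, Finset.sum_singleton, hdiag, one_smul]
  have hcj : coeffs n N a γ j
      = γ j + ∑ l ∈ Finset.Ico (j + 1) N, a j l • coeffs n N a γ l := by
    rw [coeffs]
    exact (Finset.sum_attach (Finset.Ico (j + 1) N) (fun l => a j l • coeffs n N a γ l)).symm ▸ rfl
  rw [Finset.range_eq_Ico, ← hsplit1, h0, zero_add, ← hsplit2, hsing, hcj, add_assoc,
    pi_add_self, add_zero]

/-- Core lemma: for any infinite `X`, any `n`, and any finite set `F` of coordinates, there
is a clopen set `C` determined by a finite set `S` disjoint from `F`, of measure at most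
`2⁻¹ ^ n`, with `X + C = univ`. -/
lemma core_lemma {X : Set (ℕ → ZMod 2)} (hX : X.Infinite) (n : ℕ) (F : Finset ℕ) :
    ∃ p : Set (ℕ → ZMod 2) × Finset ℕ,
      IsClopen p.1 ∧ DeterminedBy p.1 p.2 ∧ Disjoint p.2 F ∧
      cantorMeasure p.1 ≤ (2 : ENNReal)⁻¹ ^ n ∧ X + p.1 = Set.univ := by
  classical
  set base : ℕ := F.sup id + 1 with hbase
  obtain ⟨z, y, q, hyX, hqmono, hqbase, hagree, hdiff⟩ := exists_pts hX base
  set N : ℕ := 2 ^ n - 1 with hN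
  have hN1 : N + 1 = 2 ^ n := by
    have : 0 < 2 ^ n := Nat.pow_pos (by norm_num)
    omega
  -- enumeration of nonzero vectors
  have hcardV : Fintype.card (Fin n → ZMod 2) = 2 ^ n := by
    simp [Fintype.card_fun, ZMod.card]
  have hcard : Fintype.card {v : Fin n → ZMod 2 // v ≠ 0} = N := by
    rw [Fintype.card_subtype_compl, hcardV, Fintype.card_subtype_eq]
  set γe : Fin N ≃ {v : Fin n → ZMod 2 // v ≠ 0} := (Fintype.equivFinOfCardEq hcard).symm
    with hγe
  set γ : ℕ → (Fin n → ZMod 2) := fun k => if h : k < N then (γe ⟨k, h⟩).val else 0 with hγ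
  have hγsurj : ∀ c : Fin n → ZMod 2, c ≠ 0 → ∃ j < N, γ j = c := by
    intro c hc
    refine ⟨(γe.symm ⟨c, hc⟩).val, (γe.symm ⟨c, hc⟩).isLt, ?_⟩
    simp only [hγ, (γe.symm ⟨c, hc⟩).isLt, dif_pos]
    rw [Fin.eta, Equiv.apply_symm_apply]
  set a : ℕ → ℕ → ZMod 2 := fun j k => y j (q k) + z (q k) with ha
  set m : ℕ → (Fin n → ZMod 2) := coeffs n N a γ with hm
  set Φ : (ℕ → ZMod 2) → (Fin n → ZMod 2) :=
    fun w => ∑ k ∈ Finset.range N, w (q k) • m k with hΦ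
  have hΦadd : ∀ u v : ℕ → ZMod 2, Φ (u + v) = Φ u + Φ v := by
    intro u v
    simp only [hΦ, Pi.add_apply, add_smul]
    rw [Finset.sum_add_distrib]
  set C : Set (ℕ → ZMod 2) := Φ ⁻¹' {0} with hC
  set S : Finset ℕ := (Finset.range N).image q with hS
  -- continuity / clopen-ness
  have hΦcont : Continuous Φ := by
    apply continuous_finset_sum
    intro k _
    exact (continuous_of_discreteTopology (f := fun b : ZMod 2 => b • m k)).comp
      (continuous_apply (q k))
  have hclopen : IsClopen C := (isClopen_discrete {(0 : Fin n → ZMod 2)}).preimage hΦcont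
  -- Φ of the chosen points
  have hyNq : ∀ k < N, y N (q k) = z (q k) := fun k hk => hagree N (q k) (hqmono hk)
  have hΦyj : ∀ j < N, Φ (y j) + Φ (y N) = γ j := by
    intro j hj
    rw [← hΦadd]
    have heval : ∀ k < N, (y j + y N) (q k) = a j k := by
      intro k hk
      simp only [Pi.add_apply, ha, hyNq k hk]
    have : Φ (y j + y N) = ∑ k ∈ Finset.range N, a j k • m k := by
      apply Finset.sum_congr rfl
      intro k hk
      rw [heval k (Finset.mem_range.mp hk)]
    rw [this]
    apply coeffs_spec n N a γ j hj
    · exact zmod2_add_eq_one (hdiff j)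
    · intro k hk
      have : y j (q k) = z (q k) := hagree j (q k) (hqmono hk)
      rw [ha] at *
      simp only [this]
      exact zmod2_add_self _
  -- covering property
  have hcover : ∀ w : ℕ → ZMod 2, ∃ x ∈ X, Φ (w + x) = 0 := by
    intro w
    by_cases hc : Φ w + Φ (y N) = 0
    · exact ⟨y N, hyX N, by rw [hΦadd]; exact hc⟩
    · obtain ⟨j, hj, hγj⟩ := hγsurj _ hc
      refine ⟨y j, hyX j, ?_⟩
      rw [hΦadd]
      have h1 : Φ (y j) = Φ (y N) + γ j := by
        have := hΦyj j hj
        funext i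
        have h2 := congrFun this i
        have h3 : Φ (y j) i + Φ (y N) i = γ j i := h2
        simp only [Pi.add_apply]
        revert h3
        generalize Φ (y j) i = a1
        generalize Φ (y N) i = a2
        generalize γ j i = a3
        revert a1 a2 a3
        decide
      rw [h1, hγj]
      funext i
      simp only [Pi.add_apply, Pi.zero_apply]
      generalize Φ w i = a1
      generalize Φ (y N) i = a2
      revert a1 a2
      decide
  -- surjectivity of Φ
  have hΦsurj : ∀ c : Fin n → ZMod 2, ∃ w, Φ w = c := by
    intro c
    by_cases hc : c = 0
    · refine ⟨0, ?_⟩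
      simp [hΦ, hc]
    · obtain ⟨j, hj, hγj⟩ := hγsurj c hc
      refine ⟨y j + y N, ?_⟩
      rw [hΦadd, hΦyj j hj, hγj]
  choose t ht using hΦsurj
  -- fibers of Φ are translates of C
  have hfiber : ∀ c : Fin n → ZMod 2, Φ ⁻¹' {c} = (fun w => t c + w) ⁻¹' C := by
    intro c
    ext w
    simp only [Set.mem_preimage, Set.mem_singleton_iff, hC]
    rw [hΦadd, ht c]
    constructor
    · intro h; rw [h]; exact pi_add_self c
    · intro h
      funext i
      have := congrFun h i
      simp only [Pi.add_apply, Pi.zero_apply] at this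
      exact zmod2_eq_of_add_eq_zero this
  have hfibermeas : ∀ c : Fin n → ZMod 2, MeasurableSet (Φ ⁻¹' {c}) := fun c =>
    ((isClopen_discrete {c}).preimage hΦcont).1.measurableSet
  have hfibermeasure : ∀ c : Fin n → ZMod 2, cantorMeasure (Φ ⁻¹' {c}) = cantorMeasure C := by
    intro c
    rw [hfiber c]
    exact measure_preimage_add _ _ _
  -- the fibers partition the space
  have hpart : (Set.univ : Set (ℕ → ZMod 2)) = ⋃ c : Fin n → ZMod 2, Φ ⁻¹' {c} := by
    ext w
    simp only [Set.mem_univ, Set.mem_iUnion, Set.mem_preimage, Set.mem_singleton_iff, true_iff]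
    exact ⟨Φ w, rfl⟩
  have hdisj : Pairwise (Function.onFun Disjoint fun c : Fin n → ZMod 2 => Φ ⁻¹' {c}) := by
    intro c c' hcc'
    simp only [Function.onFun]
    apply Set.disjoint_left.mpr
    intro w hw hw'
    simp only [Set.mem_preimage, Set.mem_singleton_iff] at hw hw'
    exact hcc' (hw ▸ hw')
  have hsum : (1 : ENNReal) = (2 ^ n : ℕ) • cantorMeasure C := by
    rw [← cantorMeasure_univ, hpart, measure_iUnion hdisj hfibermeas, tsum_fintype]
    rw [Finset.sum_congr rfl (fun c _ => hfibermeasure c), Finset.sum_const]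
    rw [Finset.card_univ, hcardV]
  have hmeasC : cantorMeasure C = ((2 : ENNReal) ^ n)⁻¹ := by
    have h2n0 : ((2 : ENNReal) ^ n) ≠ 0 := by positivity
    have h2nt : ((2 : ENNReal) ^ n) ≠ ⊤ := by
      exact ENNReal.pow_ne_top (by norm_num)
    have hsum' : (2 : ENNReal) ^ n * cantorMeasure C = 1 := by
      rw [hsum, nsmul_eq_mul]
      congr 1
      push_cast
      ring
    calc cantorMeasure C = ((2 : ENNReal) ^ n)⁻¹ * ((2 : ENNReal) ^ n * cantorMeasure C) := by
          rw [← mul_assoc, ENNReal.inv_mul_cancel h2n0 h2nt, one_mul]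
      _ = ((2 : ENNReal) ^ n)⁻¹ := by rw [hsum', mul_one]
  refine ⟨⟨C, S⟩, hclopen, ?_, ?_, ?_, ?_⟩
  · -- determined by S
    intro x hx w hw
    simp only [hC, Set.mem_preimage, Set.mem_singleton_iff] at hx ⊢
    rw [← hx]
    apply Finset.sum_congr rfl
    intro k hk
    rw [hw (q k) (Finset.mem_image_of_mem q hk)]
  · -- disjointness from F
    rw [Finset.disjoint_left]
    intro i hi hiF
    obtain ⟨k, _, hqk⟩ := Finset.mem_image.mp hi
    have h1 : i ≤ F.sup id := Finset.le_sup (f := id) hiF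
    have h2 : base ≤ q 0 := hqbase
    have h3 : q 0 ≤ i := hqk ▸ hqmono.monotone (Nat.zero_le k)
    omega
  · -- measure bound
    rw [hmeasC, ← ENNReal.inv_pow]
  · -- bigness
    apply Set.eq_univ_of_forall
    intro w
    obtain ⟨x, hxX, hΦ0⟩ := hcover w
    rw [Set.mem_add]
    refine ⟨x, hxX, w + x, ?_, ?_⟩
    · simpa [hC] using hΦ0
    · funext i
      simp only [Pi.add_apply]
      exact zmod2_add_cancel (x i) (w i)

/-- The recursively chosen sequence of clopen sets and coordinate supports. -/
noncomputable def bigSeq (Y : ℕ → Set (ℕ → ZMod 2)) (hY : ∀ k, (Y k).Infinite) :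
    ℕ → Set (ℕ → ZMod 2) × Finset ℕ
  | n => Classical.choose (core_lemma (hY n) n
      ((Finset.range n).attach.biUnion fun k => (bigSeq Y hY k.val).2))
decreasing_by
  all_goals exact Finset.mem_range.mp k.2

lemma bigSeq_spec (Y : ℕ → Set (ℕ → ZMod 2)) (hY : ∀ k, (Y k).Infinite) (n : ℕ) :
    IsClopen (bigSeq Y hY n).1 ∧ DeterminedBy (bigSeq Y hY n).1 (bigSeq Y hY n).2 ∧
      Disjoint (bigSeq Y hY n).2
        ((Finset.range n).attach.biUnion fun k => (bigSeq Y hY k.val).2) ∧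
      cantorMeasure (bigSeq Y hY n).1 ≤ (2 : ENNReal)⁻¹ ^ n ∧
      Y n + (bigSeq Y hY n).1 = Set.univ := by
  rw [bigSeq]
  exact Classical.choose_spec (core_lemma (hY n) n _)

/-- Existence of big sequences: for every countable family `𝒜` of infinite subsets of
`2^ω` there is a sequence `(C n)` of clopen sets, determined by pairwise disjoint finite
sets of coordinates, with `μ(C n) ≤ 2^{-n}`, such that every `X ∈ 𝒜` satisfies
`X + C n = 2^ω` for infinitely many `n`; moreover `H = ⋂ m, ⋃ n > m, C n` is a null
`G_δ` set. -/
theorem exists_big_sequence (𝒜 : Set (Set (ℕ → ZMod 2))) (hcount : 𝒜.Countable)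
    (hinf : ∀ X ∈ 𝒜, X.Infinite) :
    ∃ (C : ℕ → Set (ℕ → ZMod 2)) (S : ℕ → Finset ℕ),
      (∀ n, IsClopen (C n)) ∧
      (∀ n, DeterminedBy (C n) (S n)) ∧
      (∀ m n, m ≠ n → Disjoint (S m) (S n)) ∧
      (∀ n, cantorMeasure (C n) ≤ (2 : ENNReal)⁻¹ ^ n) ∧
      (∀ X ∈ 𝒜, {n : ℕ | X + C n = Set.univ}.Infinite) ∧
      IsGδ (⋂ m, ⋃ n, ⋃ _ : m < n, C n) ∧
      cantorMeasure (⋂ m, ⋃ n, ⋃ _ : m < n, C n) = 0 := by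
  classical
  -- an enumeration of 𝒜 (or of `univ` if 𝒜 is empty) hitting every member infinitely often
  obtain ⟨Y, hYinf, hYrep⟩ :
      ∃ Y : ℕ → Set (ℕ → ZMod 2), (∀ k, (Y k).Infinite) ∧
        ∀ X ∈ 𝒜, {k : ℕ | Y k = X}.Infinite := by
    rcases Set.eq_empty_or_nonempty 𝒜 with h | h
    · exact ⟨fun _ => Set.univ, fun _ => Set.infinite_univ, fun X hX => by
        rw [h] at hX; exact absurd hX (Set.notMem_empty X)⟩
    · obtain ⟨f, hf⟩ := hcount.exists_eq_range h
      refine ⟨fun k => f (Nat.unpair k).1, fun k => ?_, fun X hX => ?_⟩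
      · apply hinf
        rw [hf]
        exact Set.mem_range_self _
      · rw [hf] at hX
        obtain ⟨i, rfl⟩ := hX
        apply Set.infinite_of_injective_forall_mem (f := fun j : ℕ => Nat.pair i j)
        · intro a b hab
          simpa using congrArg (fun x => (Nat.unpair x).2) hab
        · intro j
          simp [Set.mem_setOf_eq, Nat.unpair_pair]
  set C : ℕ → Set (ℕ → ZMod 2) := fun n => (bigSeq Y hYinf n).1 with hCdef
  set S : ℕ → Finset ℕ := fun n => (bigSeq Y hYinf n).2 with hSdef
  have hspec := bigSeq_spec Y hYinf
  have hdisjS : ∀ m n, m < n → Disjoint (S m) (S n) := by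
    intro m n hmn
    have h := (hspec n).2.2.1
    have hsub : S m ⊆ (Finset.range n).attach.biUnion fun k => (bigSeq Y hYinf k.val).2 := by
      intro i hi
      apply Finset.mem_biUnion.mpr
      exact ⟨⟨m, Finset.mem_range.mpr hmn⟩, Finset.mem_attach _ _, hi⟩
    exact (Finset.disjoint_of_subset_right hsub h).symm
  have hopen : ∀ m : ℕ, IsOpen (⋃ n, ⋃ _ : m < n, C n) :=
    fun m => isOpen_iUnion fun n => isOpen_iUnion fun _ => (hspec n).1.2
  have hmeasb : ∀ m : ℕ, cantorMeasure (⋃ n, ⋃ _ : m < n, C n) ≤ (2 : ENNReal)⁻¹ ^ m := by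
    intro m
    have heq : (⋃ n, ⋃ _ : m < n, C n) = ⋃ j : ℕ, C (m + 1 + j) := by
      ext w
      simp only [Set.mem_iUnion]
      constructor
      · rintro ⟨n, hn, hw⟩
        exact ⟨n - (m + 1), by rwa [show m + 1 + (n - (m + 1)) = n by omega]⟩
      · rintro ⟨j, hw⟩
        exact ⟨m + 1 + j, by omega, hw⟩
    rw [heq]
    calc cantorMeasure (⋃ j : ℕ, C (m + 1 + j)) ≤ ∑' j : ℕ, cantorMeasure (C (m + 1 + j)) :=
          measure_iUnion_le _
      _ ≤ ∑' j : ℕ, (2 : ENNReal)⁻¹ ^ (m + 1 + j) :=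
          ENNReal.tsum_le_tsum fun j => (hspec (m + 1 + j)).2.2.2.1
      _ = (2 : ENNReal)⁻¹ ^ (m + 1) * ∑' j : ℕ, (2 : ENNReal)⁻¹ ^ j := by
          rw [← ENNReal.tsum_mul_left]
          congr 1
          funext j
          rw [pow_add]
      _ = (2 : ENNReal)⁻¹ ^ (m + 1) * 2 := by
          rw [ENNReal.tsum_geometric, ENNReal.one_sub_inv_two, inv_inv]
      _ = (2 : ENNReal)⁻¹ ^ m := by
          rw [pow_succ, mul_assoc, ENNReal.inv_mul_cancel (by norm_num) (by norm_num), mul_one]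
  refine ⟨C, S, fun n => (hspec n).1, fun n => (hspec n).2.1, ?_, fun n => (hspec n).2.2.2.1,
    ?_, ?_, ?_⟩
  · intro m n hmn
    rcases Nat.lt_or_ge m n with h | h
    · exact hdisjS m n h
    · have : n < m := by omega
      exact (hdisjS n m this).symm
  · intro X hX
    apply Set.Infinite.mono _ (hYrep X hX)
    intro k hk
    simp only [Set.mem_setOf_eq] at hk ⊢
    rw [← hk]
    exact (hspec k).2.2.2.2
  · exact IsGδ.iInter_of_isOpen hopen
  · have hle : ∀ m : ℕ, cantorMeasure (⋂ m, ⋃ n, ⋃ _ : m < n, C n) ≤ (2 : ENNReal)⁻¹ ^ m :=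
      fun m => le_trans (measure_mono (Set.iInter_subset _ m)) (hmeasb m)
    have htend : Filter.Tendsto (fun m : ℕ => (2 : ENNReal)⁻¹ ^ m) Filter.atTop (nhds 0) :=
      ENNReal.tendsto_pow_atTop_nhds_zero_of_lt_one (by
        rw [ENNReal.inv_lt_one]; norm_num)
    exact le_antisymm (ge_of_tendsto' htend hle) bot_le
end
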